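/- arXiv:0801.0622 — 2 statements merged into one kernel-verified Lean document; each statement's English description precedes it below -/
import Mathlib

section
/- Let E = EuclideanSpace ℝ (Fin 4), η = diag(1,−1,−1,−1) the Minkowski matrix, and let X, Y : E → E be C² vector fields. For a C¹ vector field Z denote by J_Z p the Jacobian matrix of Z at p ((J_Z p)^i_j = ∂_j Z^i), and set S_Z p := (1/2) • (J_Z p + η * (J_Z p)ᵀ * η). For a C¹ matrix field T : E → Matrix (Fin 4) (Fin 4) ℝ define the Lie derivative (𝔏_X T) p := (fderiv ℝ T p) (X p) − J_X p * T p + T p * J_X p, and set [X,Y] p := (J_Y p) (X p) − (J_X p) (Y p). Then at every p: (𝔏_X S_Y) p − (𝔏_Y S_X) p − S_{[X,Y]} p = −2 • (S_X p * S_Y p − S_Y p * S_X p). (This is the flat-space form of equations (6.3)–(6.4): the degenerate differentiation S_{X,Y} measuring the failure of [ℒ_X, ℒ_Y] = ℒ_{[X,Y]} for Kosmann-Lie derivatives equals −[S_X, S_Y].) -/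
open Matrix

noncomputable section

abbrev E := EuclideanSpace ℝ (Fin 4)

/-- The Minkowski matrix `diag(1, -1, -1, -1)`. -/
def η : Matrix (Fin 4) (Fin 4) ℝ := Matrix.diagonal ![1, -1, -1, -1]

/-- The Jacobian matrix of a vector field `Z` at `p`: `(J Z p) i j = ∂_j Z^i`. -/
def J (Z : E → E) (p : E) : Matrix (Fin 4) (Fin 4) ℝ :=
  Matrix.of fun i j => fderiv ℝ Z p (EuclideanSpace.single j 1) i

/-- The η-symmetrized Jacobian `S_Z = ½ (J_Z + η J_Zᵀ η)`, i.e. the tensor field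
with components `S^i_j(Z) = ½ (∇_j Z^i + ∇^i Z_j)` in the flat Minkowski space. -/
def S (Z : E → E) (p : E) : Matrix (Fin 4) (Fin 4) ℝ :=
  (1/2 : ℝ) • (J Z p + η * (J Z p)ᵀ * η)

/-- The Lie derivative of a (1,1)-tensor field `T` along `X`, in matrix form:
`(𝔏_X T) = X·∂T − J_X T + T J_X`. -/
def LieD (X : E → E) (T : E → Matrix (Fin 4) (Fin 4) ℝ) (p : E) :
    Matrix (Fin 4) (Fin 4) ℝ :=
  (Matrix.of fun i j => fderiv ℝ (fun q => T q i j) p (X p))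
    - J X p * T p + T p * J X p

/-- The Lie bracket `[X,Y] p = (J_Y p)(X p) − (J_X p)(Y p)`. -/
def bracket (X Y : E → E) : E → E :=
  fun p => fderiv ℝ Y p (X p) - fderiv ℝ X p (Y p)

/-! ### Auxiliary lemmas -/

abbrev d4 : Fin 4 → ℝ := ![1, -1, -1, -1]

lemma sandwich_apply (M : Matrix (Fin 4) (Fin 4) ℝ) (i j : Fin 4) :
    (η * Mᵀ * η) i j = d4 i * M j i * d4 j := by
  simp [η, Matrix.mul_diagonal, Matrix.diagonal_mul]

/-- The key purely algebraic matrix identity. -/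
lemma key_matrix_identity (A B DX DY : Matrix (Fin 4) (Fin 4) ℝ) :
    ((1/2:ℝ) • (DY + η*DYᵀ*η) - A * ((1/2:ℝ)•(B + η*Bᵀ*η)) + ((1/2:ℝ)•(B + η*Bᵀ*η)) * A)
  - ((1/2:ℝ) • (DX + η*DXᵀ*η) - B * ((1/2:ℝ)•(A + η*Aᵀ*η)) + ((1/2:ℝ)•(A + η*Aᵀ*η)) * B)
  - (1/2:ℝ) • ((DY + B*A - (DX + A*B)) + η*(DY + B*A - (DX + A*B))ᵀ*η)
  = -(2:ℝ) • (((1/2:ℝ)•(A+η*Aᵀ*η)) * ((1/2:ℝ)•(B+η*Bᵀ*η))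
      - ((1/2:ℝ)•(B+η*Bᵀ*η)) * ((1/2:ℝ)•(A+η*Aᵀ*η))) := by
  have hη : η * η = 1 := by
    ext i j
    fin_cases i <;> fin_cases j <;>
      simp [η, Matrix.mul_apply, Fin.sum_univ_four, Matrix.one_apply]
  have hcan : ∀ M : Matrix (Fin 4) (Fin 4) ℝ, η * (η * M) = M := fun M => by
    rw [← Matrix.mul_assoc, hη, Matrix.one_mul]
  simp only [Matrix.transpose_add, Matrix.transpose_sub, Matrix.transpose_mul,
    smul_add, smul_sub, Matrix.mul_add, Matrix.add_mul, Matrix.mul_sub, Matrix.sub_mul,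
    Matrix.mul_smul, Matrix.smul_mul, smul_smul, Matrix.mul_assoc, hcan]
  module

lemma hasFDerivAt_fderiv {Z : E → E} (hZ : ContDiff ℝ 2 Z) (p : E) :
    HasFDerivAt (fderiv ℝ Z) (fderiv ℝ (fderiv ℝ Z) p) p :=
  (((hZ.fderiv_right (m := 1) (by norm_num)).differentiable (by norm_num)) p).hasFDerivAt

lemma hasFDerivAt_J_entry {Z : E → E} (hZ : ContDiff ℝ 2 Z) (p : E) (i j : Fin 4) :
    HasFDerivAt (fun q => J Z q i j)
      ((EuclideanSpace.proj i).comp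
        ((fderiv ℝ (fderiv ℝ Z) p).flip (EuclideanSpace.single j 1))) p := by
  have h2 := (hasFDerivAt_fderiv hZ p).clm_apply
    (hasFDerivAt_const (EuclideanSpace.single j 1) p)
  rw [ContinuousLinearMap.comp_zero, zero_add] at h2
  exact ((EuclideanSpace.proj (𝕜 := ℝ) i).hasFDerivAt).comp p h2

lemma fderiv_S_entry {Z : E → E} (hZ : ContDiff ℝ 2 Z) (p v : E) (i j : Fin 4) :
    fderiv ℝ (fun q => S Z q i j) p v
      = (1/2 : ℝ) * (fderiv ℝ (fderiv ℝ Z) p v (EuclideanSpace.single j 1) i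
          + d4 i * (fderiv ℝ (fderiv ℝ Z) p v (EuclideanSpace.single i 1) j) * d4 j) := by
  have hfun : (fun q => S Z q i j)
      = fun q => (1/2 : ℝ) * J Z q i j + ((1/2 : ℝ) * d4 i * d4 j) * J Z q j i := by
    funext q
    simp [S, sandwich_apply]
    ring
  have h1 := hasFDerivAt_J_entry hZ p i j
  have h2 := hasFDerivAt_J_entry hZ p j i
  have H := (h1.const_mul ((1:ℝ)/2)).add (h2.const_mul ((1/2 : ℝ) * d4 i * d4 j))
  rw [hfun, (show HasFDerivAt (fun q => (1/2 : ℝ) * J Z q i j + ((1/2 : ℝ) * d4 i * d4 j) * J Z q j i) _ p from H).fderiv]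
  simp
  ring

lemma clm_apply_eq_sum (L : E →L[ℝ] E) (w : E) (m : Fin 4) :
    (L w) m = ∑ k, L (EuclideanSpace.single k 1) m * w k := by
  set b := (EuclideanSpace.basisFun (Fin 4) ℝ).toBasis
  conv_lhs => rw [← b.sum_repr w]
  rw [map_sum]
  have h1 : ∀ k : Fin 4, L (b.repr w k • b k) = w k • L (EuclideanSpace.single k 1) := by
    intro k
    rw [_root_.map_smul]
    simp [b, OrthonormalBasis.coe_toBasis_repr_apply, OrthonormalBasis.coe_toBasis]
  rw [Finset.sum_congr rfl fun k _ => h1 k]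
  rw [WithLp.ofLp_sum, Finset.sum_apply m Finset.univ _]
  simp [mul_comm]

lemma hasFDerivAt_bracket (X Y : E → E) (hX : ContDiff ℝ 2 X) (hY : ContDiff ℝ 2 Y) (p : E) :
    HasFDerivAt (bracket X Y)
      (((fderiv ℝ Y p).comp (fderiv ℝ X p) + (fderiv ℝ (fderiv ℝ Y) p).flip (X p))
        - ((fderiv ℝ X p).comp (fderiv ℝ Y p) + (fderiv ℝ (fderiv ℝ X) p).flip (Y p))) p := by
  have hXd : HasFDerivAt X (fderiv ℝ X p) p :=
    ((hX.differentiable (by norm_num)) p).hasFDerivAt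
  have hYd : HasFDerivAt Y (fderiv ℝ Y p) p :=
    ((hY.differentiable (by norm_num)) p).hasFDerivAt
  exact ((hasFDerivAt_fderiv hY p).clm_apply hXd).sub ((hasFDerivAt_fderiv hX p).clm_apply hYd)

/-- Flat-space form of equations (6.3)–(6.4): the degenerate differentiation
`S_{X,Y} = L_X S_Y − L_Y S_X − S_{[X,Y]} + [S_X, S_Y]` measuring the failure of
`[ℒ_X, ℒ_Y] = ℒ_{[X,Y]}` for Kosmann-Lie derivatives equals `−[S_X, S_Y]`. -/
theorem kosmann_degenerate_differentiation_eq_neg_commutator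
    (X Y : E → E) (hX : ContDiff ℝ 2 X) (hY : ContDiff ℝ 2 Y) (p : E) :
    LieD X (S Y) p - LieD Y (S X) p - S (bracket X Y) p
      = -(2 : ℝ) • (S X p * S Y p - S Y p * S X p) := by
  set A := J X p with hA
  set B := J Y p with hB
  set DX : Matrix (Fin 4) (Fin 4) ℝ :=
    Matrix.of fun i j => fderiv ℝ (fderiv ℝ X) p (Y p) (EuclideanSpace.single j 1) i with hDX
  set DY : Matrix (Fin 4) (Fin 4) ℝ :=
    Matrix.of fun i j => fderiv ℝ (fderiv ℝ Y) p (X p) (EuclideanSpace.single j 1) i with hDY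
  -- Step 1: the partial-derivative part of the Lie derivatives
  have step1 : (Matrix.of fun i j => fderiv ℝ (fun q => S Y q i j) p (X p))
      = (1/2:ℝ) • (DY + η * DYᵀ * η) := by
    ext i j
    rw [Matrix.of_apply, fderiv_S_entry hY p (X p) i j]
    simp [sandwich_apply, hDY]
  have step2 : (Matrix.of fun i j => fderiv ℝ (fun q => S X q i j) p (Y p))
      = (1/2:ℝ) • (DX + η * DXᵀ * η) := by
    ext i j
    rw [Matrix.of_apply, fderiv_S_entry hX p (Y p) i j]
    simp [sandwich_apply, hDX]
  -- Step 2: the Jacobian of the bracket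
  have hsymmY : IsSymmSndFDerivAt ℝ Y p := hY.contDiffAt.isSymmSndFDerivAt (by norm_num)
  have hsymmX : IsSymmSndFDerivAt ℝ X p := hX.contDiffAt.isSymmSndFDerivAt (by norm_num)
  have step3 : J (bracket X Y) p = DY + B * A - (DX + A * B) := by
    ext i j
    rw [_root_.J, Matrix.of_apply, (hasFDerivAt_bracket X Y hX hY p).fderiv]
    simp only [ContinuousLinearMap.sub_apply, ContinuousLinearMap.add_apply,
      ContinuousLinearMap.comp_apply, ContinuousLinearMap.flip_apply]
    have e1 : (fderiv ℝ Y p) ((fderiv ℝ X p) (EuclideanSpace.single j 1)) i = (B * A) i j := by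
      rw [clm_apply_eq_sum, Matrix.mul_apply]
      rfl
    have e2 : (fderiv ℝ X p) ((fderiv ℝ Y p) (EuclideanSpace.single j 1)) i = (A * B) i j := by
      rw [clm_apply_eq_sum, Matrix.mul_apply]
      rfl
    have e3 : fderiv ℝ (fderiv ℝ Y) p (EuclideanSpace.single j 1) (X p) i
        = DY i j := by rw [hsymmY.eq]; rfl
    have e4 : fderiv ℝ (fderiv ℝ X) p (EuclideanSpace.single j 1) (Y p) i
        = DX i j := by rw [hsymmX.eq]; rfl
    have : ((fderiv ℝ Y p) ((fderiv ℝ X p) (EuclideanSpace.single j 1))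
          + (fderiv ℝ (fderiv ℝ Y) p) (EuclideanSpace.single j 1) (X p)
          - ((fderiv ℝ X p) ((fderiv ℝ Y p) (EuclideanSpace.single j 1))
          + (fderiv ℝ (fderiv ℝ X) p) (EuclideanSpace.single j 1) (Y p))) i
        = (B * A) i j + DY i j - ((A * B) i j + DX i j) := by
      rw [← e1, ← e2, ← e3, ← e4]
      rfl
    rw [this]
    simp [Matrix.add_apply, Matrix.sub_apply]
    ring
  -- Assemble
  rw [LieD, LieD, step1, step2, S, S, S, step3, ← hA, ← hB]
  exact key_matrix_identity A B DX DY
end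
end

section
/- Let E = EuclideanSpace ℝ (Fin 4), η = diag(1,−1,−1,−1) the Minkowski matrix, and let X, Y : E → E be C² vector fields and Z : E → E a C² vector field. With J_W p the Jacobian of W at p, S_W p := (1/2) • (J_W p + η * (J_W p)ᵀ * η), [X,Y] p := (J_Y p)(X p) − (J_X p)(Y p), define the Kosmann-Lie derivative of a vector field Z along X by (ℒ_X Z) p := [X,Z] p + (S_X p).mulVec (Z p). Then at every p: (ℒ_X (ℒ_Y Z)) p − (ℒ_Y (ℒ_X Z)) p = (ℒ_{[X,Y]} Z) p − (S_X p * S_Y p − S_Y p * S_X p).mulVec (Z p). (This is the flat-space form of the commutation relationship (6.5): [ℒ_X, ℒ_Y] = ℒ_{[X,Y]} − [S_X, S_Y].) -/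
open Matrix

noncomputable section

/-- Reinterpret a plain `Fin 4 → ℝ` vector as an element of `E`. -/
def toE (v : Fin 4 → ℝ) : E := (EuclideanSpace.equiv (Fin 4) ℝ).symm v

/-- The standard Kosmann-Lie derivative of a vector field:
`ℒ_X Z = [X, Z] + S_X · Z`. -/
def KL (X Z : E → E) : E → E :=
  fun p => bracket X Z p + toE ((S X p).mulVec (Z p))

-- ## Auxiliary definitions and lemmas
def e (j : Fin 4) : E := EuclideanSpace.single j (1:ℝ)
def d : Fin 4 → ℝ := ![1,-1,-1,-1]

lemma vec_expand (v : E) : v = ∑ j, v j • e j := by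
  ext i
  simp [e, EuclideanSpace.single_apply, Fin.sum_univ_four]
  fin_cases i <;> simp

lemma clm_applyE_expand (f : E →L[ℝ] E) (v : E) (i : Fin 4) :
    f v i = ∑ j, v j * f (e j) i := by
  conv_lhs => rw [vec_expand v]
  rw [map_sum]
  simp only [_root_.map_smul]
  rw [WithLp.ofLp_sum, Finset.sum_apply]
  simp [smul_eq_mul]

lemma S_apply (W : E → E) (q : E) (i j : Fin 4) :
    S W q i j = (1/2) * (fderiv ℝ W q (e j) i + d i * d j * fderiv ℝ W q (e i) j) := by
  simp [S, _root_.J, η, d, e, Matrix.mul_apply, Matrix.diagonal_apply, Finset.sum_ite_eq,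
    Finset.sum_ite_eq', Matrix.smul_apply]
  ring_nf

lemma mulVec_apply (M : Matrix (Fin 4) (Fin 4) ℝ) (v : Fin 4 → ℝ) (i : Fin 4) :
    M.mulVec v i = ∑ j, M i j * v j := by
  simp [Matrix.mulVec, dotProduct]

lemma KL_comp (W V : E → E) (q : E) (i : Fin 4) :
    KL W V q i = fderiv ℝ V q (W q) i - (1/2) * fderiv ℝ W q (V q) i
      + (1/2) * d i * ∑ j, d j * (fderiv ℝ W q (e i) j * V q j) := by
  have h0 : KL W V q i = bracket W V q i + ((S W q).mulVec (V q)) i := rfl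
  have h1 : bracket W V q i = fderiv ℝ V q (W q) i - fderiv ℝ W q (V q) i := by
    simp [bracket]
  rw [h0, h1, mulVec_apply]
  have h2 : ∀ j, S W q i j * V q j
      = (1/2) * (fderiv ℝ W q (e j) i * V q j) + (1/2) * d i * (d j * (fderiv ℝ W q (e i) j * V q j)) := by
    intro j; rw [S_apply]; ring
  rw [Finset.sum_congr rfl fun j _ => h2 j, Finset.sum_add_distrib, ← Finset.mul_sum, ← Finset.mul_sum]
  have h3 : ∑ j, fderiv ℝ W q (e j) i * V q j = fderiv ℝ W q (V q) i := by
    rw [clm_applyE_expand (fderiv ℝ W q) (V q) i]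
    exact Finset.sum_congr rfl fun j _ => mul_comm _ _
  rw [h3]; ring

lemma bracket_comp (X Y : E → E) (q : E) (i : Fin 4) :
    bracket X Y q i = fderiv ℝ Y q (X q) i - fderiv ℝ X q (Y q) i := by
  simp [bracket]

-- ## Derivative building blocks

def D1 (f : E → E) (p : E) (k : Fin 4) : E →L[ℝ] ℝ :=
  (EuclideanSpace.proj k).comp (fderiv ℝ f p)

def D2c (f : E → E) (p : E) (k j : Fin 4) : E →L[ℝ] ℝ :=
  ((EuclideanSpace.proj j).comp (ContinuousLinearMap.apply ℝ E (e k))).comp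
    (fderiv ℝ (fderiv ℝ f) p)

@[simp] lemma D1_apply (f : E → E) (p : E) (k : Fin 4) (v : E) :
    D1 f p k v = fderiv ℝ f p v k := by simp [D1]

@[simp] lemma D2c_apply (f : E → E) (p : E) (k j : Fin 4) (v : E) :
    D2c f p k j v = fderiv ℝ (fderiv ℝ f) p v (e k) j := by simp [D2c]

lemma hD1 (f : E → E) (hf : ContDiff ℝ 2 f) (p : E) (k : Fin 4) :
    HasFDerivAt (fun q => f q k) (D1 f p k) p := by
  have h1 : HasFDerivAt f (fderiv ℝ f p) p := (hf.differentiable (by norm_num) p).hasFDerivAt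
  exact (EuclideanSpace.proj k : E →L[ℝ] ℝ).hasFDerivAt.comp p h1

lemma hD2 (f : E → E) (hf : ContDiff ℝ 2 f) (p : E) (k j : Fin 4) :
    HasFDerivAt (fun q => fderiv ℝ f q (e k) j) (D2c f p k j) p := by
  have h1 : HasFDerivAt (fderiv ℝ f) (fderiv ℝ (fderiv ℝ f) p) p :=
    (((hf.fderiv_right (m := 1) (by norm_num)).differentiable one_ne_zero) p).hasFDerivAt
  exact (((EuclideanSpace.proj j : E →L[ℝ] ℝ).comp
    (ContinuousLinearMap.apply ℝ E (e k))).hasFDerivAt).comp p h1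

lemma KL_fderiv (W V : E → E) (hW : ContDiff ℝ 2 W) (hV : ContDiff ℝ 2 V) (p : E) (i : Fin 4) :
    DifferentiableAt ℝ (fun q => KL W V q i) p ∧
    ∀ v, fderiv ℝ (fun q => KL W V q i) p v =
      fderiv ℝ (fderiv ℝ V) p v (W p) i + fderiv ℝ V p (fderiv ℝ W p v) i
      - (1/2) * (fderiv ℝ (fderiv ℝ W) p v (V p) i + fderiv ℝ W p (fderiv ℝ V p v) i)
      + (1/2) * d i * ∑ j, d j * (fderiv ℝ (fderiv ℝ W) p v (e i) j * V p j
          + fderiv ℝ W p (e i) j * fderiv ℝ V p v j) := by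
  have hfun : (fun q => KL W V q i) = fun q =>
      (∑ k, W q k * fderiv ℝ V q (e k) i) - (1/2) * (∑ k, V q k * fderiv ℝ W q (e k) i)
      + (1/2) * d i * ∑ j, d j * (fderiv ℝ W q (e i) j * V q j) := by
    funext q
    rw [KL_comp, clm_applyE_expand (fderiv ℝ V q) (W q) i, clm_applyE_expand (fderiv ℝ W q) (V q) i]
  have H : HasFDerivAt (fun q =>
      (∑ k, W q k * fderiv ℝ V q (e k) i) - (1/2) * (∑ k, V q k * fderiv ℝ W q (e k) i)
      + (1/2) * d i * ∑ j, d j * (fderiv ℝ W q (e i) j * V q j)) _ p :=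
    ((HasFDerivAt.sum fun k (_ : k ∈ Finset.univ) => (hD1 W hW p k).mul (hD2 V hV p k i)).sub
      ((HasFDerivAt.sum fun k (_ : k ∈ Finset.univ) => (hD1 V hV p k).mul (hD2 W hW p k i)).const_mul (1/2))).add
      ((HasFDerivAt.sum fun j (_ : j ∈ Finset.univ) =>
        ((hD2 W hW p i j).mul (hD1 V hV p j)).const_mul (d j)).const_mul ((1/2) * d i))
  rw [hfun]
  refine ⟨H.differentiableAt, fun v => ?_⟩
  rw [H.fderiv]
  simp only [ContinuousLinearMap.add_apply, ContinuousLinearMap.sub_apply,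
    ContinuousLinearMap.smul_apply, ContinuousLinearMap.sum_apply, D1_apply, D2c_apply,
    smul_eq_mul]
  rw [clm_applyE_expand (fderiv ℝ (fderiv ℝ V) p v) (W p) i,
    clm_applyE_expand (fderiv ℝ V p) (fderiv ℝ W p v) i,
    clm_applyE_expand (fderiv ℝ (fderiv ℝ W) p v) (V p) i,
    clm_applyE_expand (fderiv ℝ W p) (fderiv ℝ V p v) i]
  simp only [Fin.sum_univ_four]
  ring

lemma bracket_fderiv (X Y : E → E) (hX : ContDiff ℝ 2 X) (hY : ContDiff ℝ 2 Y) (p : E) (i : Fin 4) :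
    DifferentiableAt ℝ (fun q => bracket X Y q i) p ∧
    ∀ v, fderiv ℝ (fun q => bracket X Y q i) p v =
      fderiv ℝ (fderiv ℝ Y) p v (X p) i + fderiv ℝ Y p (fderiv ℝ X p v) i
      - fderiv ℝ (fderiv ℝ X) p v (Y p) i - fderiv ℝ X p (fderiv ℝ Y p v) i := by
  have hfun : (fun q => bracket X Y q i) = fun q =>
      (∑ k, X q k * fderiv ℝ Y q (e k) i) - (∑ k, Y q k * fderiv ℝ X q (e k) i) := by
    funext q
    rw [bracket_comp, clm_applyE_expand (fderiv ℝ Y q) (X q) i, clm_applyE_expand (fderiv ℝ X q) (Y q) i]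
  have H : HasFDerivAt (fun q =>
      (∑ k, X q k * fderiv ℝ Y q (e k) i) - (∑ k, Y q k * fderiv ℝ X q (e k) i)) _ p :=
    (HasFDerivAt.sum fun k (_ : k ∈ Finset.univ) => (hD1 X hX p k).mul (hD2 Y hY p k i)).sub
      (HasFDerivAt.sum fun k (_ : k ∈ Finset.univ) => (hD1 Y hY p k).mul (hD2 X hX p k i))
  rw [hfun]
  refine ⟨H.differentiableAt, fun v => ?_⟩
  rw [H.fderiv]
  simp only [ContinuousLinearMap.add_apply, ContinuousLinearMap.sub_apply,
    ContinuousLinearMap.smul_apply, ContinuousLinearMap.sum_apply, D1_apply, D2c_apply,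
    smul_eq_mul]
  rw [clm_applyE_expand (fderiv ℝ (fderiv ℝ Y) p v) (X p) i,
    clm_applyE_expand (fderiv ℝ Y p) (fderiv ℝ X p v) i,
    clm_applyE_expand (fderiv ℝ (fderiv ℝ X) p v) (Y p) i,
    clm_applyE_expand (fderiv ℝ X p) (fderiv ℝ Y p v) i]
  simp only [Fin.sum_univ_four]
  ring

lemma differentiableAt_E (F : E → E) (p : E)
    (h : ∀ i, DifferentiableAt ℝ (fun q => F q i) p) : DifferentiableAt ℝ F p :=
  ((PiLp.continuousLinearEquiv 2 ℝ (fun _ : Fin 4 => ℝ)).symm.differentiableAt.comp p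
    (differentiableAt_pi.2 h))

lemma fderiv_component (F : E → E) (p : E) (hF : DifferentiableAt ℝ F p) (v : E) (i : Fin 4) :
    fderiv ℝ F p v i = fderiv ℝ (fun q => F q i) p v := by
  have h := ((EuclideanSpace.proj (𝕜 := ℝ) i).hasFDerivAt.comp p hF.hasFDerivAt).fderiv
  rw [show (fun q => F q i) = (EuclideanSpace.proj (𝕜 := ℝ) i) ∘ F from rfl, h]
  simp

set_option maxHeartbeats 4000000 in
/-- Flat-space form of the commutation relationship (6.5):
`[ℒ_X, ℒ_Y] = ℒ_{[X,Y]} − [S_X, S_Y]`. -/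
theorem kosmann_lie_derivative_commutator
    (X Y Z : E → E)
    (hX : ContDiff ℝ 2 X) (hY : ContDiff ℝ 2 Y) (hZ : ContDiff ℝ 2 Z) (p : E) :
    KL X (KL Y Z) p - KL Y (KL X Z) p
      = KL (bracket X Y) Z p
        - toE ((S X p * S Y p - S Y p * S X p).mulVec (Z p)) := by
  have symm2 : ∀ (f : E → E), ContDiff ℝ 2 f → ∀ v w : E,
      fderiv ℝ (fderiv ℝ f) p v w = fderiv ℝ (fderiv ℝ f) p w v := fun f hf v w =>
    ((hf.contDiffAt).isSymmSndFDerivAt (by norm_num)) v w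
  have hG1d : DifferentiableAt ℝ (KL Y Z) p :=
    differentiableAt_E _ p fun i => (KL_fderiv Y Z hY hZ p i).1
  have hG2d : DifferentiableAt ℝ (KL X Z) p :=
    differentiableAt_E _ p fun i => (KL_fderiv X Z hX hZ p i).1
  have hBd : DifferentiableAt ℝ (bracket X Y) p :=
    differentiableAt_E _ p fun i => (bracket_fderiv X Y hX hY p i).1
  have hc1 : ∀ (v : E) i, fderiv ℝ (KL Y Z) p v i = fderiv ℝ (fun q => KL Y Z q i) p v :=
    fun v i => fderiv_component _ p hG1d v i
  have hc2 : ∀ (v : E) i, fderiv ℝ (KL X Z) p v i = fderiv ℝ (fun q => KL X Z q i) p v :=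
    fun v i => fderiv_component _ p hG2d v i
  have hc3 : ∀ (v : E) i, fderiv ℝ (bracket X Y) p v i = fderiv ℝ (fun q => bracket X Y q i) p v :=
    fun v i => fderiv_component _ p hBd v i
  have hG1f : ∀ i v, fderiv ℝ (fun q => KL Y Z q i) p v =
      fderiv ℝ (fderiv ℝ Z) p v (Y p) i + fderiv ℝ Z p (fderiv ℝ Y p v) i
      - (1/2) * (fderiv ℝ (fderiv ℝ Y) p v (Z p) i + fderiv ℝ Y p (fderiv ℝ Z p v) i)
      + (1/2) * d i * ∑ j, d j * (fderiv ℝ (fderiv ℝ Y) p v (e i) j * Z p j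
          + fderiv ℝ Y p (e i) j * fderiv ℝ Z p v j) := fun i => (KL_fderiv Y Z hY hZ p i).2
  have hG2f : ∀ i v, fderiv ℝ (fun q => KL X Z q i) p v =
      fderiv ℝ (fderiv ℝ Z) p v (X p) i + fderiv ℝ Z p (fderiv ℝ X p v) i
      - (1/2) * (fderiv ℝ (fderiv ℝ X) p v (Z p) i + fderiv ℝ X p (fderiv ℝ Z p v) i)
      + (1/2) * d i * ∑ j, d j * (fderiv ℝ (fderiv ℝ X) p v (e i) j * Z p j
          + fderiv ℝ X p (e i) j * fderiv ℝ Z p v j) := fun i => (KL_fderiv X Z hX hZ p i).2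
  have hBf : ∀ i v, fderiv ℝ (fun q => bracket X Y q i) p v =
      fderiv ℝ (fderiv ℝ Y) p v (X p) i + fderiv ℝ Y p (fderiv ℝ X p v) i
      - fderiv ℝ (fderiv ℝ X) p v (Y p) i - fderiv ℝ X p (fderiv ℝ Y p v) i :=
    fun i => (bracket_fderiv X Y hX hY p i).2
  have hA1 : ∀ (v : E) i, fderiv ℝ (KL Y Z) p v i =
      fderiv ℝ (fderiv ℝ Z) p v (Y p) i + fderiv ℝ Z p (fderiv ℝ Y p v) i
      - (1/2) * (fderiv ℝ (fderiv ℝ Y) p v (Z p) i + fderiv ℝ Y p (fderiv ℝ Z p v) i)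
      + (1/2) * d i * ∑ j, d j * (fderiv ℝ (fderiv ℝ Y) p v (e i) j * Z p j
          + fderiv ℝ Y p (e i) j * fderiv ℝ Z p v j) :=
    fun v i => (hc1 v i).trans (hG1f i v)
  have hA2 : ∀ (v : E) i, fderiv ℝ (KL X Z) p v i =
      fderiv ℝ (fderiv ℝ Z) p v (X p) i + fderiv ℝ Z p (fderiv ℝ X p v) i
      - (1/2) * (fderiv ℝ (fderiv ℝ X) p v (Z p) i + fderiv ℝ X p (fderiv ℝ Z p v) i)
      + (1/2) * d i * ∑ j, d j * (fderiv ℝ (fderiv ℝ X) p v (e i) j * Z p j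
          + fderiv ℝ X p (e i) j * fderiv ℝ Z p v j) :=
    fun v i => (hc2 v i).trans (hG2f i v)
  have hA3 : ∀ (v : E) i, fderiv ℝ (bracket X Y) p v i =
      fderiv ℝ (fderiv ℝ Y) p v (X p) i + fderiv ℝ Y p (fderiv ℝ X p v) i
      - fderiv ℝ (fderiv ℝ X) p v (Y p) i - fderiv ℝ X p (fderiv ℝ Y p v) i :=
    fun v i => (hc3 v i).trans (hBf i v)
  ext i
  have hsub : ∀ u v : E, (u - v) i = u i - v i := fun _ _ => rfl
  have htoE : ∀ v : Fin 4 → ℝ, toE v i = v i := fun _ => rfl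
  -- step A : structural rewrites
  simp only [hsub, htoE, KL_comp, bracket_comp, mulVec_apply, Matrix.sub_apply,
    Matrix.mul_apply, S_apply, hA1, hA2, hA3]
  -- step B : symmetry of second derivatives
  simp only [symm2 Z hZ (Y p) (X p), symm2 Y hY (Z p) (X p), symm2 X hX (Z p) (Y p),
    symm2 Y hY (e i) (X p), symm2 X hX (e i) (Y p)]
  -- step C : bilinear expansions
  simp only [clm_applyE_expand _ (KL Y Z p), clm_applyE_expand _ (KL X Z p),
    clm_applyE_expand _ (bracket X Y p),
    clm_applyE_expand _ (fderiv ℝ Y p (X p)), clm_applyE_expand _ (fderiv ℝ X p (Y p)),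
    clm_applyE_expand _ (fderiv ℝ X p (Z p)), clm_applyE_expand _ (fderiv ℝ Y p (Z p)),
    clm_applyE_expand _ (fderiv ℝ Z p (X p)), clm_applyE_expand _ (fderiv ℝ Z p (Y p)),
    clm_applyE_expand _ (fderiv ℝ X p (e i)), clm_applyE_expand _ (fderiv ℝ Y p (e i)),
    clm_applyE_expand _ (X p), clm_applyE_expand _ (Y p), clm_applyE_expand _ (Z p),
    KL_comp, bracket_comp]
  -- step D : expand sums and finish
  simp only [Fin.sum_univ_four]
  simp only [d, Matrix.cons_val_zero, Matrix.cons_val_one, Matrix.head_cons,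
    Matrix.cons_val_two, Matrix.tail_cons, Matrix.cons_val_three]
  ring

end
end
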